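/- Let A be a finite dimensional algebra over an algebraically closed field K, let T be a functorially finite torsion class in mod(A), and let A →φ T₀ → T₁ → 0 be an exact sequence in which φ is a minimal left T-approximation of A. Then a module P ∈ T is split projective in T if and only if P belongs to add(T₀). -/

import Mathlib

open CategoryTheory

section Defs

variable (K : Type) [Field K] (A : Type) [Ring A] [Algebra K A]

/-- An `A`-module is in `mod(A)` if it is finite dimensional over `K`
(via restriction of scalars along `K → A`). -/
def modCls : Set (ModuleCat A) :=
  {M | @FiniteDimensional K (RestrictScalars K A M) _ _ (RestrictScalars.module K A M)}

variable {A}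

/-- A class of modules is replete (closed under isomorphisms). -/
def IsoClosed (C : Set (ModuleCat A)) : Prop :=
  ∀ ⦃M N : ModuleCat A⦄, (M ≅ N) → M ∈ C → N ∈ C

/-- Closed under quotients. -/
def QuotClosed (C : Set (ModuleCat A)) : Prop :=
  ∀ ⦃M N : ModuleCat A⦄ (f : M ⟶ N), Function.Surjective f → M ∈ C → N ∈ C

/-- Closed under extensions. -/
def ExtClosed (C : Set (ModuleCat A)) : Prop :=
  ∀ ⦃M E N : ModuleCat A⦄ (f : M ⟶ E) (g : E ⟶ N),
    Function.Injective f → Function.Surjective g → Function.Exact f g →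
    M ∈ C → N ∈ C → E ∈ C

/-- Closed under kernels. -/
def KerClosed (C : Set (ModuleCat A)) : Prop :=
  ∀ ⦃M N : ModuleCat A⦄ (f : M ⟶ N), M ∈ C → N ∈ C →
    ModuleCat.of A ↥(LinearMap.ker f.hom) ∈ C

/-- Closed under cokernels. -/
def CokerClosed (C : Set (ModuleCat A)) : Prop :=
  ∀ ⦃M N : ModuleCat A⦄ (f : M ⟶ N), M ∈ C → N ∈ C →
    ModuleCat.of A (N ⧸ LinearMap.range f.hom) ∈ C

variable (A)

/-- A wide subcategory of `mod(A)`: a replete class of finite dimensional modules closed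
under kernels, cokernels and extensions. -/
def IsWide (C : Set (ModuleCat A)) : Prop :=
  C ⊆ modCls K A ∧ IsoClosed C ∧ KerClosed C ∧ CokerClosed C ∧ ExtClosed C

/-- A torsion class in `mod(A)`: a replete class of finite dimensional modules closed
under quotients and extensions. -/
def IsTorsionClass (C : Set (ModuleCat A)) : Prop :=
  C ⊆ modCls K A ∧ IsoClosed C ∧ QuotClosed C ∧ ExtClosed C

variable {A}

/-- `gen C`: all quotients of finite direct sums of objects of `C`. -/
def gen (C : Set (ModuleCat A)) : Set (ModuleCat A) :=
  {X | ∃ (n : ℕ) (M : Fin n → ModuleCat A) (_ : ∀ i, M i ∈ C)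
      (f : ModuleCat.of A (∀ i, M i) ⟶ X), Function.Surjective f}

/-- Modules admitting a `C`-filtration `0 = F 0 ⊆ F 1 ⊆ ⋯ ⊆ F n = X` of length exactly `n`,
with all subquotients `F (i+1) / F i` in `C`. -/
def filtLen (C : Set (ModuleCat A)) (n : ℕ) : Set (ModuleCat A) :=
  {X | ∃ F : Fin (n + 1) → Submodule A X,
      Monotone F ∧ F 0 = ⊥ ∧ F (Fin.last n) = ⊤ ∧
      ∀ i : Fin n, ModuleCat.of A
        (↥(F i.succ) ⧸ Submodule.comap (F i.succ).subtype (F i.castSucc)) ∈ C}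

/-- `filt C`: all modules admitting a finite filtration with subquotients in `C`. -/
def filt (C : Set (ModuleCat A)) : Set (ModuleCat A) :=
  {X | ∃ n, X ∈ filtLen C n}

/-- `C^{⋆n}`: modules with a `C`-filtration of length at most `n`. -/
def filtAtMost (C : Set (ModuleCat A)) (n : ℕ) : Set (ModuleCat A) :=
  {X | ∃ m ≤ n, X ∈ filtLen C m}

/-- `α(T)`: the modules `X ∈ T` such that for every map `g : Y → X` with `Y ∈ T`,
the kernel of `g` is again in `T`. -/
def alpha (T : Set (ModuleCat A)) : Set (ModuleCat A) :=
  {X | X ∈ T ∧ ∀ ⦃Y : ModuleCat A⦄ (g : Y ⟶ X), Y ∈ T →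
      ModuleCat.of A ↥(LinearMap.ker g.hom) ∈ T}

/-- `g : X ⟶ C₁` is a left `C`-approximation of `X`. -/
def IsLeftApprox (C : Set (ModuleCat A)) {X C₁ : ModuleCat A} (g : X ⟶ C₁) : Prop :=
  C₁ ∈ C ∧ ∀ ⦃C' : ModuleCat A⦄ (h : X ⟶ C'), C' ∈ C → ∃ k : C₁ ⟶ C', g ≫ k = h

/-- `g : C₂ ⟶ X` is a right `C`-approximation of `X`. -/
def IsRightApprox (C : Set (ModuleCat A)) {C₂ X : ModuleCat A} (g : C₂ ⟶ X) : Prop :=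
  C₂ ∈ C ∧ ∀ ⦃C' : ModuleCat A⦄ (h : C' ⟶ X), C' ∈ C → ∃ k : C' ⟶ C₂, k ≫ g = h

/-- A left approximation is (left) minimal if every endomorphism compatible with it is an
isomorphism. -/
def IsMinimalLeftApprox (C : Set (ModuleCat A)) {X C₁ : ModuleCat A} (g : X ⟶ C₁) : Prop :=
  IsLeftApprox C g ∧ ∀ h : C₁ ⟶ C₁, g ≫ h = g → IsIso h

variable (A)

/-- A class `C` is functorially finite in `mod(A)` if every finite dimensional module has
both a left and a right `C`-approximation. -/
def FunctFinite (C : Set (ModuleCat A)) : Prop :=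
  ∀ X ∈ modCls K A, (∃ (C₁ : ModuleCat A) (g : X ⟶ C₁), IsLeftApprox C g) ∧
    (∃ (C₂ : ModuleCat A) (g : C₂ ⟶ X), IsRightApprox C g)

variable {A}

/-- `add M`: direct summands of finite direct sums of copies of `M`. -/
def addOf (M : ModuleCat A) : Set (ModuleCat A) :=
  {X | ∃ (n : ℕ) (i : X ⟶ ModuleCat.of A (Fin n → M)) (r : ModuleCat.of A (Fin n → M) ⟶ X),
      i ≫ r = 𝟙 X}

/-- `gen M`: quotients of finite direct sums of copies of `M`. -/
def genOf (M : ModuleCat A) : Set (ModuleCat A) :=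
  {X | ∃ (n : ℕ) (f : ModuleCat.of A (Fin n → M) ⟶ X), Function.Surjective f}

/-- `P` is split projective in `C`: `P ∈ C` and every epimorphism onto `P` from an
object of `C` splits. -/
def SplitProjIn (C : Set (ModuleCat A)) (P : ModuleCat A) : Prop :=
  P ∈ C ∧ ∀ ⦃M : ModuleCat A⦄ (f : M ⟶ P), M ∈ C → Function.Surjective f →
    ∃ s : P ⟶ M, s ≫ f = 𝟙 P

end Defs

/-!
Minimality of `φ` makes `T₀` split projective in `T`: given an epimorphism `M ↠ T₀` with
`M ∈ T`, the map `φ` lifts to `M` because `A` is free, the lift factors back through `φ`, and the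
resulting endomorphism of `T₀` fixing `φ` is an isomorphism. Split projectivity passes to finite
direct sums and to direct summands, so every module in `add T₀` is split projective. Conversely a
split projective `P ∈ T` is finitely generated, and lifting its generators along the
approximation `φ` yields an epimorphism `T₀ⁿ ↠ P`, which then splits.
-/

universe u

section Closure

variable {A : Type} [Ring A] {C : Set (ModuleCat.{u} A)}

lemma ExtClosed.prod_mem (hext : ExtClosed C) {M N : ModuleCat A} (hM : M ∈ C) (hN : N ∈ C) :
    ModuleCat.of A (M × N) ∈ C :=
  hext (ModuleCat.ofHom (LinearMap.inl A M N)) (ModuleCat.ofHom (LinearMap.snd A M N))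
    LinearMap.inl_injective LinearMap.snd_surjective Function.Exact.inl_snd hM hN

lemma finPi_mem (hquot : QuotClosed C) (hiso : IsoClosed C) (hext : ExtClosed C)
    {M : ModuleCat A} (hM : M ∈ C) : ∀ n, ModuleCat.of A (Fin n → M) ∈ C
  | 0 => hquot (0 : M ⟶ ModuleCat.of A (Fin 0 → M)) (fun _ => ⟨0, Subsingleton.elim _ _⟩) hM
  | n + 1 => hiso (Fin.consLinearEquiv A fun _ : Fin (n + 1) => M).toModuleIso
      (hext.prod_mem hM (finPi_mem hquot hiso hext hM n))

end Closure

namespace SplitProjIn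

variable {A : Type} [Ring A] {C : Set (ModuleCat.{u} A)} {P Q : ModuleCat.{u} A}

lemma of_iso (hP : SplitProjIn C P) (e : P ≅ Q) (hQ : Q ∈ C) : SplitProjIn C Q := by
  refine ⟨hQ, fun M f hM hf => ?_⟩
  have he : Function.Surjective e.inv := (ModuleCat.epi_iff_surjective e.inv).1 inferInstance
  obtain ⟨s, hs⟩ := hP.2 (f ≫ e.inv) hM (he.comp hf)
  rw [← Category.assoc, Iso.comp_inv_eq, Category.id_comp] at hs
  exact ⟨e.inv ≫ s, by simp [hs]⟩

lemma prod (hP : SplitProjIn C P) (hQ : SplitProjIn C Q) (hPQ : ModuleCat.of A (P × Q) ∈ C) :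
    SplitProjIn C (ModuleCat.of A (P × Q)) := by
  refine ⟨hPQ, fun M f hM hf => ?_⟩
  set f₁ : M →ₗ[A] P := LinearMap.fst A P Q ∘ₗ f.hom
  set f₂ : M →ₗ[A] Q := LinearMap.snd A P Q ∘ₗ f.hom
  obtain ⟨s, hs⟩ :=
    hP.2 (ModuleCat.ofHom f₁) hM ((LinearMap.fst_surjective (R := A) (M₂ := Q)).comp hf)
  replace hs (p : P) : f₁ (s p) = p := by simpa using ConcreteCategory.congr_hom hs p
  -- correcting `f₂` by the section `s` kills the `P`-component, leaving an epimorphism onto `Q`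
  set F : M →ₗ[A] Q := f₂ - f₂ ∘ₗ s.hom ∘ₗ f₁
  have hF : Function.Surjective F := fun q => by
    obtain ⟨m, hm⟩ := hf (0, q)
    exact ⟨m, by simp [F, f₁, f₂, hm]⟩
  obtain ⟨t, ht⟩ := hQ.2 (ModuleCat.ofHom F) hM hF
  replace ht (q : Q) : F (t q) = q := by simpa using ConcreteCategory.congr_hom ht q
  set t' : Q →ₗ[A] M := t.hom - s.hom ∘ₗ f₁ ∘ₗ t.hom
  have ht'₁ (q : Q) : f₁ (t' q) = 0 := by simp [t', hs]
  have ht'₂ (q : Q) : f₂ (t' q) = q := by simpa [t', F] using ht q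
  refine ⟨ModuleCat.ofHom (s.hom ∘ₗ LinearMap.fst A P Q +
    t' ∘ₗ (LinearMap.snd A P Q - f₂ ∘ₗ s.hom ∘ₗ LinearMap.fst A P Q)), ?_⟩
  refine ModuleCat.hom_ext (LinearMap.ext fun x => Prod.ext ?_ ?_)
  · change f₁ (s x.1 + t' (x.2 - f₂ (s x.1))) = x.1
    rw [map_add, ht'₁, hs, add_zero]
  · change f₂ (s x.1 + t' (x.2 - f₂ (s x.1))) = x.2
    rw [map_add, ht'₂, add_sub_cancel]

lemma finPi (hquot : QuotClosed C) (hiso : IsoClosed C) (hext : ExtClosed C)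
    (hP : SplitProjIn C P) : ∀ n, SplitProjIn C (ModuleCat.of A (Fin n → P))
  | 0 => ⟨finPi_mem hquot hiso hext hP.1 0, fun _ _ _ _ =>
      ⟨0, ModuleCat.hom_ext (LinearMap.ext fun _ => Subsingleton.elim _ _)⟩⟩
  | n + 1 =>
    have ih := finPi hquot hiso hext hP n
    (hP.prod ih (hext.prod_mem hP.1 ih.1)).of_iso
      (Fin.consLinearEquiv A fun _ : Fin (n + 1) => P).toModuleIso
      (finPi_mem hquot hiso hext hP.1 (n + 1))

lemma of_retract (hquot : QuotClosed C) (hext : ExtClosed C) (hQ : SplitProjIn C Q)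
    (i : P ⟶ Q) (r : Q ⟶ P) (hir : i ≫ r = 𝟙 P) : SplitProjIn C P := by
  replace hir (p : P) : r (i p) = p := by simpa using ConcreteCategory.congr_hom hir p
  refine ⟨hquot r (fun p => ⟨i p, hir p⟩) hQ.1, fun M f hM hf => ?_⟩
  -- `g` is `i ∘ f` on `M` and the projection onto `ker r` on `Q`, so that `r ∘ g = f ∘ fst`
  set g : M × Q →ₗ[A] Q := i.hom ∘ₗ f.hom ∘ₗ LinearMap.fst A M Q +
    (LinearMap.id - i.hom ∘ₗ r.hom) ∘ₗ LinearMap.snd A M Q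
  have hrg (x : M × Q) : r (g x) = f x.1 := by simp [g, hir]
  have hg : Function.Surjective g := fun q => by
    obtain ⟨m, hm⟩ := hf (r q)
    exact ⟨(m, q - i (r q)), by simp [g, hm, hir]⟩
  obtain ⟨s, hs⟩ := hQ.2 (ModuleCat.ofHom g) (hext.prod_mem hM hQ.1) hg
  replace hs (q : Q) : g (s q) = q := by simpa using ConcreteCategory.congr_hom hs q
  refine ⟨i ≫ s ≫ ModuleCat.ofHom (LinearMap.fst A M Q),
    ModuleCat.hom_ext (LinearMap.ext fun p => ?_)⟩
  change f (s (i p)).1 = p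
  rw [← hrg, hs, hir]

lemma mem_addOf {M : ModuleCat.{u} A} (hP : SplitProjIn C P) (hgen : P ∈ genOf M)
    (hpow : ∀ n, ModuleCat.of A (Fin n → M) ∈ C) : P ∈ addOf M := by
  obtain ⟨n, f, hf⟩ := hgen
  obtain ⟨s, hs⟩ := hP.2 f (hpow n) hf
  exact ⟨n, s, f, hs⟩

end SplitProjIn

section Approximation

variable {A : Type} [Ring A] {C : Set (ModuleCat A)} {T₀ : ModuleCat A}
  {φ : ModuleCat.of A A ⟶ T₀}

lemma IsMinimalLeftApprox.splitProjIn (hφ : IsMinimalLeftApprox C φ) : SplitProjIn C T₀ := by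
  refine ⟨hφ.1.1, fun M f hM hf => ?_⟩
  obtain ⟨m, hm⟩ := hf (φ 1)
  obtain ⟨k, hk⟩ := hφ.1.2 (ModuleCat.ofHom (LinearMap.toSpanSingleton A M m)) hM
  have : IsIso (k ≫ f) := hφ.2 _ <| by
    rw [← Category.assoc, hk]
    exact ModuleCat.hom_ext (LinearMap.ext_ring (by simpa using hm))
  exact ⟨inv (k ≫ f) ≫ k, by simp⟩

lemma IsLeftApprox.mem_genOf (hφ : IsLeftApprox C φ) {X : ModuleCat A} (hX : X ∈ C)
    [Module.Finite A X] : X ∈ genOf T₀ := by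
  obtain ⟨n, g, hg⟩ := Module.Finite.exists_fin' A X
  choose k hk using fun j => hφ.2 (ModuleCat.ofHom (g ∘ₗ LinearMap.single A (fun _ => A) j)) hX
  replace hk (j : Fin n) (a : A) : k j (φ a) = g (Pi.single j a) := by
    simpa using ConcreteCategory.congr_hom (hk j) a
  refine ⟨n, ModuleCat.ofHom (∑ j, (k j).hom ∘ₗ LinearMap.proj j), fun x => ?_⟩
  obtain ⟨a, rfl⟩ := hg x
  refine ⟨fun j => φ (a j), ?_⟩
  simp [hk, ← map_sum, Finset.univ_sum_single a]

end Approximation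

lemma finite_of_mem_modCls {K A : Type} [Field K] [Ring A] [Algebra K A] {X : ModuleCat A}
    (hX : X ∈ modCls K A) : Module.Finite A X :=
  letI := Module.restrictScalars K A X
  haveI := IsScalarTower.restrictScalars K A X
  haveI : Module.Finite K X := hX
  Module.Finite.of_restrictScalars_finite K A X

theorem split_projective_iff_add_T0_general (K : Type) [Field K] (A : Type) [Ring A] [Algebra K A]
    (T : Set (ModuleCat A))
    (hT : IsTorsionClass K A T)
    (T₀ : ModuleCat A) (φ : ModuleCat.of A A ⟶ T₀)
    (hφ : IsMinimalLeftApprox T φ)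
    (P : ModuleCat A) :
    SplitProjIn T P ↔ P ∈ addOf T₀ := by
  obtain ⟨hmod, hiso, hquot, hext⟩ := hT
  constructor
  · intro hP
    have := finite_of_mem_modCls (hmod hP.1)
    exact hP.mem_addOf (hφ.1.mem_genOf hP.1) (finPi_mem hquot hiso hext hφ.1.1)
  · rintro ⟨n, i, r, hir⟩
    exact (hφ.splitProjIn.finPi hquot hiso hext n).of_retract hquot hext i r hir

theorem split_projective_iff_add_T0 (K : Type) [Field K] [IsAlgClosed K] (A : Type) [Ring A] [Algebra K A]
    [FiniteDimensional K A]
    (T : Set (ModuleCat A))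
    (hT : IsTorsionClass K A T) (hff : FunctFinite K A T)
    (T₀ T₁ : ModuleCat A) (φ : ModuleCat.of A A ⟶ T₀) (ψ : T₀ ⟶ T₁)
    (hφ : IsMinimalLeftApprox T φ) (hψ : Function.Surjective ψ)
    (hexact : Function.Exact φ ψ)
    (P : ModuleCat A) (hP : P ∈ T) :
    SplitProjIn T P ↔ P ∈ addOf T₀ :=
  split_projective_iff_add_T0_general K A T hT T₀ φ hφ P
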